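/- arXiv:2408.16035 — 7 statements merged into one kernel-verified Lean document; each statement's English description precedes it below -/
import Mathlib

section
/- Fix δ ∈ [0,1] and define the partition U* by D_h* = {r : δ·Q_h(r) ≥ (1-δ)·Q_l(r)} and D_l* = its complement. Then (i) for every measurable partition U = {D_l, D_h} of ℝ^m, E_I(U*;δ) ≤ E_I(U;δ); and (ii) conversely, if a measurable partition U† = {D_l†, D_h†} satisfies E_I(U†;δ) = E_I(U*;δ), then the sets {r ∈ D_h† : δ·Q_h(r) < (1-δ)·Q_l(r)} and {r ∈ D_l† : δ·Q_h(r) > (1-δ)·Q_l(r)} both have Lebesgue measure zero. -/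
open MeasureTheory Set

lemma null_of_setIntegral_zero_of_pos {α : Type*} [MeasurableSpace α] {μ : Measure α}
    {g : α → ℝ} {T : Set α} (hT : MeasurableSet T) (hg : IntegrableOn g T μ)
    (hpos : ∀ x ∈ T, 0 < g x) (h0 : ∫ x in T, g x ∂μ = 0) : μ T = 0 := by
  have hae : 0 ≤ᵐ[μ.restrict T] g :=
    (ae_restrict_iff' hT).mpr (ae_of_all _ fun x hx => (hpos x hx).le)
  have hz : g =ᵐ[μ.restrict T] 0 :=
    (setIntegral_eq_zero_iff_of_nonneg_ae hae hg).mp h0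
  have hz' : ∀ᵐ x ∂μ, x ∈ T → g x = 0 := (ae_restrict_iff' hT).mp hz
  have hsub : T ⊆ {x | ¬ (x ∈ T → g x = 0)} := by
    intro x hx hcontra
    exact (hpos x hx).ne' (hcontra hx)
  exact measure_mono_null hsub hz'

lemma null_of_setIntegral_zero_of_neg {α : Type*} [MeasurableSpace α] {μ : Measure α}
    {g : α → ℝ} {T : Set α} (hT : MeasurableSet T) (hg : IntegrableOn g T μ)
    (hneg : ∀ x ∈ T, g x < 0) (h0 : ∫ x in T, g x ∂μ = 0) : μ T = 0 := by
  apply null_of_setIntegral_zero_of_pos hT hg.neg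
    (fun x hx => by simpa using (hneg x hx))
  simp only [Pi.neg_apply, integral_neg, h0, neg_zero]

/-- For `δ ∈ [0,1]` and impure densities `Q_l, Q_h` built from `N, P` with
prevalences `α_l < α_h`, the partition `U* = {Dh*, Dl*}` with
`Dh* = {r : δ·Q_h(r) ≥ (1-δ)·Q_l(r)}` and `Dl* = (Dh*)ᶜ` minimizes the expected impure error
`E_I(U;δ) = (1-δ)·Q_{l,Dh} + δ·Q_{h,Dl}` over all measurable partitions, and conversely any
measurable partition attaining the minimum agrees with `U*` up to the boundary set and
Lebesgue-null sets. -/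
theorem stmt_2 {m : ℕ} (N P : (Fin m → ℝ) → ℝ)
    (hNmeas : Measurable N) (hPmeas : Measurable P)
    (hNnonneg : ∀ r, 0 ≤ N r) (hPnonneg : ∀ r, 0 ≤ P r)
    (hNint : ∫ r, N r = 1) (hPint : ∫ r, P r = 1)
    (αl αh : ℝ) (hαl : 0 ≤ αl) (hlh : αl < αh) (hαh : αh ≤ 1)
    (Ql Qh : (Fin m → ℝ) → ℝ)
    (hQl : ∀ r, Ql r = αl * P r + (1 - αl) * N r)
    (hQh : ∀ r, Qh r = αh * P r + (1 - αh) * N r)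
    (δ : ℝ) (hδ : δ ∈ Set.Icc (0 : ℝ) 1) :
    (∀ Dl Dh : Set (Fin m → ℝ), MeasurableSet Dl → MeasurableSet Dh →
      Dl ∪ Dh = Set.univ → Dl ∩ Dh = ∅ →
      (1 - δ) * (∫ r in {r | δ * Qh r ≥ (1 - δ) * Ql r}, Ql r)
          + δ * (∫ r in {r | δ * Qh r ≥ (1 - δ) * Ql r}ᶜ, Qh r)
        ≤ (1 - δ) * (∫ r in Dh, Ql r) + δ * (∫ r in Dl, Qh r))
    ∧
    (∀ Dl Dh : Set (Fin m → ℝ), MeasurableSet Dl → MeasurableSet Dh →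
      Dl ∪ Dh = Set.univ → Dl ∩ Dh = ∅ →
      (1 - δ) * (∫ r in Dh, Ql r) + δ * (∫ r in Dl, Qh r)
        = (1 - δ) * (∫ r in {r | δ * Qh r ≥ (1 - δ) * Ql r}, Ql r)
          + δ * (∫ r in {r | δ * Qh r ≥ (1 - δ) * Ql r}ᶜ, Qh r) →
      volume {r | r ∈ Dh ∧ δ * Qh r < (1 - δ) * Ql r} = 0
        ∧ volume {r | r ∈ Dl ∧ δ * Qh r > (1 - δ) * Ql r} = 0) := by
  -- basic integrability and measurability
  have hNi : Integrable N := by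
    by_contra h
    rw [integral_undef h] at hNint; norm_num at hNint
  have hPi : Integrable P := by
    by_contra h
    rw [integral_undef h] at hPint; norm_num at hPint
  have hQlfun : Ql = fun r => αl * P r + (1 - αl) * N r := funext hQl
  have hQhfun : Qh = fun r => αh * P r + (1 - αh) * N r := funext hQh
  have hQli : Integrable Ql := by
    rw [hQlfun]; exact (hPi.const_mul αl).add (hNi.const_mul (1 - αl))
  have hQhi : Integrable Qh := by
    rw [hQhfun]; exact (hPi.const_mul αh).add (hNi.const_mul (1 - αh))
  have hQlm : Measurable Ql := by
    rw [hQlfun]; exact (hPmeas.const_mul αl).add (hNmeas.const_mul (1 - αl))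
  have hQhm : Measurable Qh := by
    rw [hQhfun]; exact (hPmeas.const_mul αh).add (hNmeas.const_mul (1 - αh))
  set g : (Fin m → ℝ) → ℝ := fun r => δ * Qh r - (1 - δ) * Ql r with hg
  have hgi : Integrable g := (hQhi.const_mul δ).sub (hQli.const_mul (1 - δ))
  set S : Set (Fin m → ℝ) := {r | δ * Qh r ≥ (1 - δ) * Ql r} with hSdef
  have hS : MeasurableSet S :=
    measurableSet_le (hQlm.const_mul (1 - δ)) (hQhm.const_mul δ)
  -- the key identity: E_I(Dh) = δ ∫ Qh - ∫_{Dh} g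
  have key : ∀ Dh : Set (Fin m → ℝ), MeasurableSet Dh →
      (1 - δ) * (∫ r in Dh, Ql r) + δ * (∫ r in Dhᶜ, Qh r)
        = δ * (∫ r, Qh r) - ∫ r in Dh, g r := by
    intro Dh hDh
    have h1 : (∫ r in Dh, Qh r) + ∫ r in Dhᶜ, Qh r = ∫ r, Qh r :=
      integral_add_compl hDh hQhi
    have h2 : ∫ r in Dh, g r
        = δ * (∫ r in Dh, Qh r) - (1 - δ) * (∫ r in Dh, Ql r) := by
      rw [hg]
      rw [integral_sub ((hQhi.const_mul δ).integrableOn)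
        ((hQli.const_mul (1 - δ)).integrableOn), integral_const_mul, integral_const_mul]
    linear_combination δ * h1 + h2
  -- decompositions
  have decompA : ∀ A : Set (Fin m → ℝ), MeasurableSet A →
      (∫ r in A ∩ S, g r) + (∫ r in A \ S, g r) = ∫ r in A, g r := by
    intro A _
    exact integral_inter_add_diff hS hgi.integrableOn
  have decompS : ∀ A : Set (Fin m → ℝ), MeasurableSet A →
      (∫ r in A ∩ S, g r) + (∫ r in S \ A, g r) = ∫ r in S, g r := by
    intro A hA
    rw [inter_comm]
    exact integral_inter_add_diff hA hgi.integrableOn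
  have hneg : ∀ A : Set (Fin m → ℝ), MeasurableSet A → (∫ r in A \ S, g r) ≤ 0 := by
    intro A hA
    apply setIntegral_nonpos (hA.diff hS)
    intro r hr
    have hr2 : ¬ (δ * Qh r ≥ (1 - δ) * Ql r) := hr.2
    simp only [hg]; linarith [lt_of_not_ge hr2]
  have hpos : ∀ A : Set (Fin m → ℝ), MeasurableSet A → 0 ≤ ∫ r in S \ A, g r := by
    intro A hA
    apply setIntegral_nonneg (hS.diff hA)
    intro r hr
    have hr1 : δ * Qh r ≥ (1 - δ) * Ql r := hr.1
    simp only [hg]; linarith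
  have hDlcomp : ∀ Dl Dh : Set (Fin m → ℝ), Dl ∪ Dh = Set.univ → Dl ∩ Dh = ∅ →
      Dl = Dhᶜ := by
    intro Dl Dh hu hi
    ext r
    constructor
    · intro hr hr'
      exact absurd (mem_inter hr hr') (by rw [hi]; exact notMem_empty r)
    · intro hr
      rcases (by rw [hu]; trivial : r ∈ Dl ∪ Dh) with h | h
      · exact h
      · exact absurd h hr
  constructor
  · intro Dl Dh hDl hDh hu hi
    have hDl' : Dl = Dhᶜ := hDlcomp Dl Dh hu hi
    rw [hDl', key Dh hDh, key S hS]
    have h1 := decompA Dh hDh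
    have h2 := decompS Dh hDh
    have h3 := hneg Dh hDh
    have h4 := hpos Dh hDh
    linarith
  · intro Dl Dh hDl hDh hu hi heq
    have hDl' : Dl = Dhᶜ := hDlcomp Dl Dh hu hi
    rw [hDl'] at heq
    rw [key Dh hDh, key S hS] at heq
    have h1 := decompA Dh hDh
    have h2 := decompS Dh hDh
    have h3 := hneg Dh hDh
    have h4 := hpos Dh hDh
    have hz1 : ∫ r in Dh \ S, g r = 0 := by linarith
    have hz2 : ∫ r in S \ Dh, g r = 0 := by linarith
    constructor
    · have hTeq : {r | r ∈ Dh ∧ δ * Qh r < (1 - δ) * Ql r} = Dh \ S := by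
        ext r
        simp only [mem_setOf_eq, mem_diff, hSdef, ge_iff_le, not_le]
      rw [hTeq]
      apply null_of_setIntegral_zero_of_neg (hDh.diff hS) hgi.integrableOn _ hz1
      intro r hr
      have hr2 : ¬ (δ * Qh r ≥ (1 - δ) * Ql r) := hr.2
      simp only [hg]; linarith [lt_of_not_ge hr2]
    · have hT : MeasurableSet (S \ Dh) := hS.diff hDh
      have hsub : {r | r ∈ Dl ∧ δ * Qh r > (1 - δ) * Ql r}
          ⊆ {x | ¬ (x ∈ S \ Dh → g x = 0)} := by
        intro r hr
        rw [hDl'] at hr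
        intro hcontra
        have hrin : r ∈ S \ Dh := ⟨le_of_lt hr.2, hr.1⟩
        have h0 := hcontra hrin
        simp only [hg] at h0
        have heq' : δ * Qh r = (1 - δ) * Ql r := by linarith
        exact absurd heq' (ne_of_gt hr.2)
      apply measure_mono_null hsub
      have hae : 0 ≤ᵐ[volume.restrict (S \ Dh)] g :=
        (ae_restrict_iff' hT).mpr (ae_of_all _ fun r hr => by
          have hr1 : δ * Qh r ≥ (1 - δ) * Ql r := hr.1
          show (0:ℝ) ≤ g r
          simp only [hg]; linarith)
      have hzae : g =ᵐ[volume.restrict (S \ Dh)] 0 :=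
        (setIntegral_eq_zero_iff_of_nonneg_ae hae hgi.integrableOn).mp hz2
      exact (ae_restrict_iff' hT).mp hzae
end

section
/- Let 0 ≤ α_l < α_h ≤ 1 and q ∈ [0,1]. For every r ∈ ℝ^m: δ(q)·Q_h(r) > (1-δ(q))·Q_l(r) if and only if q·P(r) > (1-q)·N(r); δ(q)·Q_h(r) < (1-δ(q))·Q_l(r) if and only if q·P(r) < (1-q)·N(r); and δ(q)·Q_h(r) = (1-δ(q))·Q_l(r) if and only if q·P(r) = (1-q)·N(r). Hence the optimal classification domains D_p*(q) = {r : q·P(r) > (1-q)·N(r)}, D_n*(q) = {r : q·P(r) < (1-q)·N(r)}, and boundary set B*(q) = {r : q·P(r) = (1-q)·N(r)} are recovered exactly from the impure densities via δ(q). -/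
open Set

/-!
Writing `D` for the denominator of `δ(q)`, the contamination cancels in the difference of the two
sides:
`δ(q)·Q_h − (1 − δ(q))·Q_l = (α_h − α_l)/D · (q·P − (1 − q)·N)`.
For `0 ≤ α_l < α_h ≤ 1` and `q ∈ [0,1]` the factor `(α_h − α_l)/D` is positive, so both
differences have the same sign.
-/

section Threshold

variable {K : Type*} [Field K]

/-- The paper's `δ(q)`. -/
def correctedThreshold (αl αh q : K) : K :=
  (q * (1 - αl) + (1 - q) * αl) / ((αl + αh) * (1 - q) + (2 - αl - αh) * q)

theorem correctedThreshold_mul_sub (αl αh q p n : K)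
    (hD : (αl + αh) * (1 - q) + (2 - αl - αh) * q ≠ 0) :
    correctedThreshold αl αh q * (αh * p + (1 - αh) * n)
        - (1 - correctedThreshold αl αh q) * (αl * p + (1 - αl) * n)
      = (αh - αl) / ((αl + αh) * (1 - q) + (2 - αl - αh) * q) * (q * p - (1 - q) * n) := by
  rw [correctedThreshold, one_sub_div hD, div_mul_eq_mul_div, div_mul_eq_mul_div,
    div_mul_eq_mul_div, ← sub_div]
  congr 1
  ring

variable [LinearOrder K] [IsStrictOrderedRing K]

theorem correctedThreshold_denom_pos {αl αh q : K} (hαl : 0 ≤ αl) (hlh : αl < αh)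
    (hαh : αh ≤ 1) (hq : q ∈ Icc (0 : K) 1) :
    0 < (αl + αh) * (1 - q) + (2 - αl - αh) * q := by
  obtain ⟨hq0, hq1⟩ := hq
  nlinarith

theorem lt_iff_lt_and_eq_iff_eq_of_sub_eq_mul {a b c x y : K} (hc : 0 < c)
    (h : a - b = c * (x - y)) :
    (b < a ↔ y < x) ∧ (a < b ↔ x < y) ∧ (a = b ↔ x = y) := by
  have transfer : ∀ {a b x y : K}, a - b = c * (x - y) → (b < a ↔ y < x) := fun h => by
    rw [← sub_pos, h, mul_pos_iff_of_pos_left hc, sub_pos]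
  refine ⟨transfer h, transfer (by linear_combination -h), ?_⟩
  rw [← sub_eq_zero, h, mul_eq_zero, or_iff_right hc.ne', sub_eq_zero]

end Threshold

theorem stmt_6_general {m : ℕ} (N P : (Fin m → ℝ) → ℝ)
    (αl αh : ℝ) (hαl : 0 ≤ αl) (hlh : αl < αh) (hαh : αh ≤ 1)
    (Ql Qh : (Fin m → ℝ) → ℝ)
    (hQl : ∀ r, Ql r = αl * P r + (1 - αl) * N r)
    (hQh : ∀ r, Qh r = αh * P r + (1 - αh) * N r)
    (δ : ℝ → ℝ)
    (hδ : ∀ q, δ q = (q * (1 - αl) + (1 - q) * αl)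
      / ((αl + αh) * (1 - q) + (2 - αl - αh) * q))
    (q : ℝ) (hq : q ∈ Set.Icc (0 : ℝ) 1) :
    (∀ r, (δ q * Qh r > (1 - δ q) * Ql r ↔ q * P r > (1 - q) * N r)
        ∧ (δ q * Qh r < (1 - δ q) * Ql r ↔ q * P r < (1 - q) * N r)
        ∧ (δ q * Qh r = (1 - δ q) * Ql r ↔ q * P r = (1 - q) * N r))
    ∧ {r | δ q * Qh r > (1 - δ q) * Ql r} = {r | q * P r > (1 - q) * N r}
    ∧ {r | δ q * Qh r < (1 - δ q) * Ql r} = {r | q * P r < (1 - q) * N r}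
    ∧ {r | δ q * Qh r = (1 - δ q) * Ql r} = {r | q * P r = (1 - q) * N r} := by
  have hD := correctedThreshold_denom_pos hαl hlh hαh hq
  have hc : 0 < (αh - αl) / ((αl + αh) * (1 - q) + (2 - αl - αh) * q) :=
    div_pos (sub_pos.mpr hlh) hD
  have pointwise : ∀ r, (δ q * Qh r > (1 - δ q) * Ql r ↔ q * P r > (1 - q) * N r)
      ∧ (δ q * Qh r < (1 - δ q) * Ql r ↔ q * P r < (1 - q) * N r)
      ∧ (δ q * Qh r = (1 - δ q) * Ql r ↔ q * P r = (1 - q) * N r) := fun r => by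
    refine lt_iff_lt_and_eq_iff_eq_of_sub_eq_mul hc ?_
    rw [hδ, hQl, hQh]
    exact correctedThreshold_mul_sub αl αh q (P r) (N r) hD.ne'
  exact ⟨pointwise, ext fun r => (pointwise r).1, ext fun r => (pointwise r).2.1,
    ext fun r => (pointwise r).2.2⟩

/-- For `0 ≤ α_l < α_h ≤ 1`, `q ∈ [0,1]`, and every `r`:
`δ(q)·Q_h(r) > (1-δ(q))·Q_l(r) ↔ q·P(r) > (1-q)·N(r)`,
`δ(q)·Q_h(r) < (1-δ(q))·Q_l(r) ↔ q·P(r) < (1-q)·N(r)`, and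
`δ(q)·Q_h(r) = (1-δ(q))·Q_l(r) ↔ q·P(r) = (1-q)·N(r)`. Hence the optimal classification
domains `D_p*(q)`, `D_n*(q)` and boundary set `B*(q)` are recovered exactly from the impure
densities via `δ(q)`. -/
theorem stmt_6 {m : ℕ} (N P : (Fin m → ℝ) → ℝ)
    (hNmeas : Measurable N) (hPmeas : Measurable P)
    (hNnonneg : ∀ r, 0 ≤ N r) (hPnonneg : ∀ r, 0 ≤ P r)
    (hNint : MeasureTheory.integral MeasureTheory.volume N = 1)
    (hPint : MeasureTheory.integral MeasureTheory.volume P = 1)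
    (αl αh : ℝ) (hαl : 0 ≤ αl) (hlh : αl < αh) (hαh : αh ≤ 1)
    (Ql Qh : (Fin m → ℝ) → ℝ)
    (hQl : ∀ r, Ql r = αl * P r + (1 - αl) * N r)
    (hQh : ∀ r, Qh r = αh * P r + (1 - αh) * N r)
    (δ : ℝ → ℝ)
    (hδ : ∀ q, δ q = (q * (1 - αl) + (1 - q) * αl)
      / ((αl + αh) * (1 - q) + (2 - αl - αh) * q))
    (q : ℝ) (hq : q ∈ Set.Icc (0 : ℝ) 1) :
    (∀ r, (δ q * Qh r > (1 - δ q) * Ql r ↔ q * P r > (1 - q) * N r)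
        ∧ (δ q * Qh r < (1 - δ q) * Ql r ↔ q * P r < (1 - q) * N r)
        ∧ (δ q * Qh r = (1 - δ q) * Ql r ↔ q * P r = (1 - q) * N r))
    ∧ {r | δ q * Qh r > (1 - δ q) * Ql r} = {r | q * P r > (1 - q) * N r}
    ∧ {r | δ q * Qh r < (1 - δ q) * Ql r} = {r | q * P r < (1 - q) * N r}
    ∧ {r | δ q * Qh r = (1 - δ q) * Ql r} = {r | q * P r = (1 - q) * N r} :=
  stmt_6_general N P αl αh hαl hlh hαh Ql Qh hQl hQh δ hδ q hq
end

section
/- Let 0 ≤ α_l < α_h ≤ 1 and q ∈ [0,1]. There exist real constants k > 0 and C, both independent of the partition U, such that for every measurable partition U = {D_n, D_p} of ℝ^m: E_I(U; δ(q)) = k·E(U;q) + C. Explicitly one may take k = (α_h - α_l) / ((α_l+α_h)(1-q) + (2-α_l-α_h)q). In particular, the objective functions E(·;q) and E_I(·;δ(q)) have exactly the same minimizers. -/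
open MeasureTheory Set

/-!
Both objectives are affine in the two masses `N(D_p)` and `P(D_n)`: since `N` and `P` have total
mass one, `N(D_n) = 1 - N(D_p)` and `P(D_p) = 1 - P(D_n)`, so `E_I(U; δ)` is a constant plus
`N(D_p)` and `P(D_n)` with coefficients `1 - α_l - (2 - α_l - α_h) δ` and `(α_l + α_h) δ - α_l`.
The choice `δ = δ(q)` makes these coefficients `k (1 - q)` and `k q`, and an increasing affine
change of objective does not move its minimizers.
-/

section PartitionError

variable {α : Type*} [MeasurableSpace α] (μ : Measure α)

/-- The paper's `E(U; q)` for `U = {Dn, Dp}`; its `E_I(U; δ)` is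
`partitionError μ Ql Qh δ Dn Dp`. -/
noncomputable def partitionError (N P : α → ℝ) (q : ℝ) (Dn Dp : Set α) : ℝ :=
  (1 - q) * ∫ x in Dp, N x ∂μ + q * ∫ x in Dn, P x ∂μ

variable {μ}

theorem setIntegral_compl_of_integral_eq_one {f : α → ℝ} (hf : ∫ x, f x ∂μ = 1) {s : Set α}
    (hs : MeasurableSet s) : ∫ x in sᶜ, f x ∂μ = 1 - ∫ x in s, f x ∂μ := by
  rw [setIntegral_compl hs (Integrable.of_integral_ne_zero (by simp [hf])), hf]

theorem setIntegral_const_mul_add_const_mul {N P : α → ℝ} (hN : Integrable N μ)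
    (hP : Integrable P μ) (a b : ℝ) (s : Set α) :
    ∫ x in s, a * P x + b * N x ∂μ = a * ∫ x in s, P x ∂μ + b * ∫ x in s, N x ∂μ := by
  rw [integral_add (hP.const_mul a).integrableOn (hN.const_mul b).integrableOn,
    integral_const_mul, integral_const_mul]

theorem partitionError_mixture_eq {N P : α → ℝ} (hN : ∫ x, N x ∂μ = 1)
    (hP : ∫ x, P x ∂μ = 1) {s : Set α} (hs : MeasurableSet s) {αl αh q δ D : ℝ} (hD0 : D ≠ 0)
    (hD : D = (αl + αh) * (1 - q) + (2 - αl - αh) * q)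
    (hδ : δ = (q * (1 - αl) + (1 - q) * αl) / D) :
    partitionError μ (fun x => αl * P x + (1 - αl) * N x) (fun x => αh * P x + (1 - αh) * N x)
        δ s sᶜ
      = (αh - αl) / D * partitionError μ N P q s sᶜ + ((1 - δ) * αl + δ * (1 - αh)) := by
  have hNi : Integrable N μ := Integrable.of_integral_ne_zero (by simp [hN])
  have hPi : Integrable P μ := Integrable.of_integral_ne_zero (by simp [hP])
  have hNs : ∫ x in s, N x ∂μ = 1 - ∫ x in sᶜ, N x ∂μ := by
    rw [setIntegral_compl_of_integral_eq_one hN hs]; ring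
  simp only [partitionError]
  rw [setIntegral_const_mul_add_const_mul hNi hPi, setIntegral_const_mul_add_const_mul hNi hPi,
    setIntegral_compl_of_integral_eq_one hP hs, hNs]
  subst hδ
  field_simp
  rw [hD]
  ring

end PartitionError

theorem compl_eq_of_union_eq_univ_of_inter_eq_empty {α : Type*} {s t : Set α}
    (hU : s ∪ t = univ) (hI : s ∩ t = ∅) : sᶜ = t :=
  (IsCompl.of_eq hI hU).compl_eq

theorem le_iff_le_of_affine {k C a b a' b' : ℝ} (hk : 0 < k) (ha : a' = k * a + C)
    (hb : b' = k * b + C) : a ≤ b ↔ a' ≤ b' := by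
  rw [ha, hb, add_le_add_iff_right, mul_le_mul_iff_right₀ hk]

theorem mixture_denom_pos {αl αh q : ℝ} (hαl : 0 ≤ αl) (hlh : αl < αh) (hαh : αh ≤ 1)
    (hq : q ∈ Icc (0 : ℝ) 1) : 0 < (αl + αh) * (1 - q) + (2 - αl - αh) * q := by
  obtain ⟨hq0, hq1⟩ := hq
  nlinarith [mul_nonneg (add_nonneg hαl (hαl.trans hlh.le)) (sub_nonneg.2 hq1),
    mul_nonneg (by linarith : (0 : ℝ) ≤ 2 - αl - αh) hq0]

theorem stmt_7_general {m : ℕ} (N P : (Fin m → ℝ) → ℝ)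
    (hNint : ∫ r, N r = 1) (hPint : ∫ r, P r = 1)
    (αl αh : ℝ) (hαl : 0 ≤ αl) (hlh : αl < αh) (hαh : αh ≤ 1)
    (Ql Qh : (Fin m → ℝ) → ℝ)
    (hQl : ∀ r, Ql r = αl * P r + (1 - αl) * N r)
    (hQh : ∀ r, Qh r = αh * P r + (1 - αh) * N r)
    (δ : ℝ → ℝ)
    (hδ : ∀ q', δ q' = (q' * (1 - αl) + (1 - q') * αl)
      / ((αl + αh) * (1 - q') + (2 - αl - αh) * q'))
    (q : ℝ) (hq : q ∈ Set.Icc (0 : ℝ) 1) :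
    0 < (αh - αl) / ((αl + αh) * (1 - q) + (2 - αl - αh) * q)
    ∧ (∃ C : ℝ, ∀ Dn Dp : Set (Fin m → ℝ), MeasurableSet Dn → MeasurableSet Dp →
        Dn ∪ Dp = Set.univ → Dn ∩ Dp = ∅ →
        (1 - δ q) * (∫ r in Dp, Ql r) + δ q * (∫ r in Dn, Qh r)
          = ((αh - αl) / ((αl + αh) * (1 - q) + (2 - αl - αh) * q))
              * ((1 - q) * (∫ r in Dp, N r) + q * (∫ r in Dn, P r)) + C)
    ∧ (∀ Dn Dp : Set (Fin m → ℝ), MeasurableSet Dn → MeasurableSet Dp →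
        Dn ∪ Dp = Set.univ → Dn ∩ Dp = ∅ →
        ((∀ Dn' Dp' : Set (Fin m → ℝ), MeasurableSet Dn' → MeasurableSet Dp' →
            Dn' ∪ Dp' = Set.univ → Dn' ∩ Dp' = ∅ →
            (1 - q) * (∫ r in Dp, N r) + q * (∫ r in Dn, P r)
              ≤ (1 - q) * (∫ r in Dp', N r) + q * (∫ r in Dn', P r))
          ↔ (∀ Dn' Dp' : Set (Fin m → ℝ), MeasurableSet Dn' → MeasurableSet Dp' →
            Dn' ∪ Dp' = Set.univ → Dn' ∩ Dp' = ∅ →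
            (1 - δ q) * (∫ r in Dp, Ql r) + δ q * (∫ r in Dn, Qh r)
              ≤ (1 - δ q) * (∫ r in Dp', Ql r) + δ q * (∫ r in Dn', Qh r)))) := by
  set D := (αl + αh) * (1 - q) + (2 - αl - αh) * q with hD
  have hDpos : 0 < D := mixture_denom_pos hαl hlh hαh hq
  have hE_affine : ∀ Dn Dp : Set (Fin m → ℝ), MeasurableSet Dn → MeasurableSet Dp →
      Dn ∪ Dp = univ → Dn ∩ Dp = ∅ →
      partitionError volume Ql Qh (δ q) Dn Dp
        = (αh - αl) / D * partitionError volume N P q Dn Dp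
          + ((1 - δ q) * αl + δ q * (1 - αh)) := by
    intro Dn Dp hDn _ hU hI
    obtain rfl := compl_eq_of_union_eq_univ_of_inter_eq_empty hU hI
    obtain rfl : Ql = _ := funext hQl
    obtain rfl : Qh = _ := funext hQh
    exact partitionError_mixture_eq hNint hPint hDn hDpos.ne' hD (hδ q)
  have hk : 0 < (αh - αl) / D := div_pos (sub_pos.2 hlh) hDpos
  refine ⟨hk, ⟨_, hE_affine⟩, fun Dn Dp hDn hDp hU hI => ?_⟩
  exact forall₂_congr fun Dn' Dp' => forall₄_congr fun hDn' hDp' hU' hI' =>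
    le_iff_le_of_affine hk (hE_affine Dn Dp hDn hDp hU hI) (hE_affine Dn' Dp' hDn' hDp' hU' hI')

/-- For `0 ≤ α_l < α_h ≤ 1` and `q ∈ [0,1]`, there exist constants `k > 0`
(explicitly `k = (α_h - α_l)/((α_l+α_h)(1-q) + (2-α_l-α_h)q)`) and `C`, independent of the
partition, such that `E_I(U; δ(q)) = k·E(U;q) + C` for every measurable partition
`U = {Dn, Dp}`; in particular `E(·;q)` and `E_I(·;δ(q))` have exactly the same minimizers. -/
theorem stmt_7 {m : ℕ} (N P : (Fin m → ℝ) → ℝ)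
    (hNmeas : Measurable N) (hPmeas : Measurable P)
    (hNnonneg : ∀ r, 0 ≤ N r) (hPnonneg : ∀ r, 0 ≤ P r)
    (hNint : ∫ r, N r = 1) (hPint : ∫ r, P r = 1)
    (αl αh : ℝ) (hαl : 0 ≤ αl) (hlh : αl < αh) (hαh : αh ≤ 1)
    (Ql Qh : (Fin m → ℝ) → ℝ)
    (hQl : ∀ r, Ql r = αl * P r + (1 - αl) * N r)
    (hQh : ∀ r, Qh r = αh * P r + (1 - αh) * N r)
    (δ : ℝ → ℝ)
    (hδ : ∀ q', δ q' = (q' * (1 - αl) + (1 - q') * αl)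
      / ((αl + αh) * (1 - q') + (2 - αl - αh) * q'))
    (q : ℝ) (hq : q ∈ Set.Icc (0 : ℝ) 1) :
    0 < (αh - αl) / ((αl + αh) * (1 - q) + (2 - αl - αh) * q)
    ∧ (∃ C : ℝ, ∀ Dn Dp : Set (Fin m → ℝ), MeasurableSet Dn → MeasurableSet Dp →
        Dn ∪ Dp = Set.univ → Dn ∩ Dp = ∅ →
        (1 - δ q) * (∫ r in Dp, Ql r) + δ q * (∫ r in Dn, Qh r)
          = ((αh - αl) / ((αl + αh) * (1 - q) + (2 - αl - αh) * q))
              * ((1 - q) * (∫ r in Dp, N r) + q * (∫ r in Dn, P r)) + C)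
    ∧ (∀ Dn Dp : Set (Fin m → ℝ), MeasurableSet Dn → MeasurableSet Dp →
        Dn ∪ Dp = Set.univ → Dn ∩ Dp = ∅ →
        ((∀ Dn' Dp' : Set (Fin m → ℝ), MeasurableSet Dn' → MeasurableSet Dp' →
            Dn' ∪ Dp' = Set.univ → Dn' ∩ Dp' = ∅ →
            (1 - q) * (∫ r in Dp, N r) + q * (∫ r in Dn, P r)
              ≤ (1 - q) * (∫ r in Dp', N r) + q * (∫ r in Dn', P r))
          ↔ (∀ Dn' Dp' : Set (Fin m → ℝ), MeasurableSet Dn' → MeasurableSet Dp' →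
            Dn' ∪ Dp' = Set.univ → Dn' ∩ Dp' = ∅ →
            (1 - δ q) * (∫ r in Dp, Ql r) + δ q * (∫ r in Dn, Qh r)
              ≤ (1 - δ q) * (∫ r in Dp', Ql r) + δ q * (∫ r in Dn', Qh r)))) :=
  stmt_7_general N P hNint hPint αl αh hαl hlh hαh Ql Qh hQl hQh δ hδ q hq
end

section
/- Let 0 ≤ α_l < α_h ≤ 1 and δ_l = α_l/(α_l+α_h). Then the intersection over all δ with δ_l < δ ≤ 1 of the sets 𝔻_p(δ) = {r : δ·Q_h(r) ≥ (1-δ)·Q_l(r)} equals {r : N(r) = 0}. Moreover, at δ = δ_l itself, 𝔻_p(δ_l) = {r : δ_l·Q_h(r) ≥ (1-δ_l)·Q_l(r)} = {r : N(r) = 0}. -/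
open Set

/-!
Multiplying the threshold inequality at `δ_l` by `α_l + α_h` turns it into `(α_l - α_h) N(r) ≥ 0`,
so it holds exactly where `N` vanishes. Where `N(r) = 0` the inequality reduces to
`(1 - δ) α_l P(r) ≤ δ α_h P(r)`, which holds for every `δ ≥ δ_l`; conversely, an inequality between
continuous functions of `δ` that holds on `(δ_l, 1]` persists at `δ_l`.
-/

lemma le_of_forall_mem_Ioc_of_continuous {f g : ℝ → ℝ} (hf : Continuous f) (hg : Continuous g)
    {a b : ℝ} (hab : a < b) (h : ∀ x ∈ Ioc a b, f x ≤ g x) : f a ≤ g a := by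
  have hcl : closure (Ioc a b) ⊆ {x | f x ≤ g x} := closure_minimal h (isClosed_le hf hg)
  rw [closure_Ioc hab.ne] at hcl
  exact hcl (left_mem_Icc.2 hab.le)

lemma mul_sub_mixture_at_threshold (a b p n : ℝ) (h : a + b ≠ 0) :
    (a + b) * (a / (a + b) * (b * p + (1 - b) * n)
      - (1 - a / (a + b)) * (a * p + (1 - a) * n)) = (a - b) * n := by
  field_simp
  ring

lemma mixture_le_at_threshold_iff {a b p n : ℝ} (ha : 0 ≤ a) (hab : a < b) (hn : 0 ≤ n) :
    (1 - a / (a + b)) * (a * p + (1 - a) * n) ≤ a / (a + b) * (b * p + (1 - b) * n)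
      ↔ n = 0 := by
  have hs : 0 < a + b := by linarith
  have hid := mul_sub_mixture_at_threshold a b p n hs.ne'
  constructor
  · intro hle
    have : 0 ≤ (a - b) * n := hid ▸ mul_nonneg hs.le (sub_nonneg.2 hle)
    nlinarith
  · rintro rfl
    rw [mul_zero (a - b)] at hid
    exact sub_nonneg.1 ((mul_eq_zero.1 hid).resolve_left hs.ne').ge

lemma one_sub_mul_le_mul_of_div_le {a b p δ : ℝ} (hp : 0 ≤ p) (hs : 0 < a + b) (hδ : a / (a + b) ≤ δ) :
    (1 - δ) * (a * p) ≤ δ * (b * p) := by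
  have hδ' : (1 - δ) * a ≤ δ * b := by
    rw [div_le_iff₀ hs] at hδ
    linarith
  simpa only [mul_assoc] using mul_le_mul_of_nonneg_right hδ' hp

theorem stmt_9_general {m : ℕ} (N P : (Fin m → ℝ) → ℝ)
    (hNnonneg : ∀ r, 0 ≤ N r) (hPnonneg : ∀ r, 0 ≤ P r)
    (αl αh : ℝ) (hαl : 0 ≤ αl) (hlh : αl < αh)
    (Ql Qh : (Fin m → ℝ) → ℝ)
    (hQl : ∀ r, Ql r = αl * P r + (1 - αl) * N r)
    (hQh : ∀ r, Qh r = αh * P r + (1 - αh) * N r) :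
    (⋂ δ ∈ Set.Ioc (αl / (αl + αh)) (1 : ℝ),
        {r : Fin m → ℝ | δ * Qh r ≥ (1 - δ) * Ql r})
      = {r : Fin m → ℝ | N r = 0}
    ∧ {r : Fin m → ℝ | (αl / (αl + αh)) * Qh r ≥ (1 - αl / (αl + αh)) * Ql r}
      = {r : Fin m → ℝ | N r = 0} := by
  have hs : 0 < αl + αh := by linarith
  have hδl : αl / (αl + αh) < 1 := (div_lt_one hs).2 (by linarith)
  have key (r : Fin m → ℝ) :
      (1 - αl / (αl + αh)) * Ql r ≤ αl / (αl + αh) * Qh r ↔ N r = 0 := by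
    rw [hQl, hQh]
    exact mixture_le_at_threshold_iff hαl hlh (hNnonneg r)
  refine ⟨?_, Set.ext key⟩
  ext r
  simp only [mem_iInter, mem_ofPred_eq]
  constructor
  · intro h
    exact (key r).1 (le_of_forall_mem_Ioc_of_continuous (by fun_prop) (by fun_prop) hδl h)
  · intro hN δ hδ
    rw [hQl, hQh, hN, mul_zero, mul_zero, add_zero, add_zero]
    exact one_sub_mul_le_mul_of_div_le (hPnonneg r) hs hδ.1.le

/-- For `0 ≤ α_l < α_h ≤ 1` and `δ_l = α_l/(α_l+α_h)`, the intersection over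
all `δ ∈ (δ_l, 1]` of the sets `𝔻_p(δ) = {r : δ·Q_h(r) ≥ (1-δ)·Q_l(r)}` equals
`{r : N(r) = 0}`; moreover `𝔻_p(δ_l) = {r : N(r) = 0}` as well. -/
theorem stmt_9 {m : ℕ} (N P : (Fin m → ℝ) → ℝ)
    (hNmeas : Measurable N) (hPmeas : Measurable P)
    (hNnonneg : ∀ r, 0 ≤ N r) (hPnonneg : ∀ r, 0 ≤ P r)
    (αl αh : ℝ) (hαl : 0 ≤ αl) (hlh : αl < αh) (hαh : αh ≤ 1)
    (Ql Qh : (Fin m → ℝ) → ℝ)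
    (hQl : ∀ r, Ql r = αl * P r + (1 - αl) * N r)
    (hQh : ∀ r, Qh r = αh * P r + (1 - αh) * N r) :
    (⋂ δ ∈ Set.Ioc (αl / (αl + αh)) (1 : ℝ),
        {r : Fin m → ℝ | δ * Qh r ≥ (1 - δ) * Ql r})
      = {r : Fin m → ℝ | N r = 0}
    ∧ {r : Fin m → ℝ | (αl / (αl + αh)) * Qh r ≥ (1 - αl / (αl + αh)) * Ql r}
      = {r : Fin m → ℝ | N r = 0} :=
  stmt_9_general N P hNnonneg hPnonneg αl αh hαl hlh Ql Qh hQl hQh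
end

section
/- Let 0 ≤ α_l < α_h ≤ 1, δ_l = α_l/(α_l+α_h), and δ_h = (1-α_l)/(2-α_l-α_h). Then for every δ with 0 ≤ δ < δ_l, the set {r : δ·Q_h(r) > (1-δ)·Q_l(r)} is empty; and for every δ with δ_h < δ ≤ 1, the set {r : δ·Q_h(r) < (1-δ)·Q_l(r)} is empty. (That is, pseudoprevalence values outside [δ_l, δ_h] produce degenerate classifiers.) -/
open Set

/-!
`δ·Q_h - (1-δ)·Q_l = (δ(α_l+α_h) - α_l)·P + (δ(2-α_l-α_h) - (1-α_l))·N`, and `δ_l ≤ δ_h`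
(equivalent to `α_l ≤ α_h`). So below `δ_l` both coefficients are negative and, `P` and `N` being
nonnegative, the difference is never positive. The case above `δ_h` is the same statement after
exchanging `P ↔ N`, `α ↦ 1 - α` and `δ ↦ 1 - δ`, which swaps the roles of `Q_l` and `Q_h`.
-/

lemma mul_mix_le_of_lt_lower {a b δ p n : ℝ} (hp : 0 ≤ p) (hn : 0 ≤ n)
    (ha : 0 ≤ a) (hab : a < b) (hb : b ≤ 1) (hδ : δ < a / (a + b)) :
    δ * (b * p + (1 - b) * n) ≤ (1 - δ) * (a * p + (1 - a) * n) := by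
  have hsum : 0 < a + b := by linarith
  have hcoefP : δ * (a + b) < a := (lt_div_iff₀ hsum).mp hδ
  have hcoefN : δ * (2 - a - b) < 1 - a := by nlinarith
  have hdiff : (1 - δ) * (a * p + (1 - a) * n) - δ * (b * p + (1 - b) * n)
      = (a - δ * (a + b)) * p + (1 - a - δ * (2 - a - b)) * n := by ring
  linarith [mul_nonneg (sub_nonneg.mpr hcoefP.le) hp, mul_nonneg (sub_nonneg.mpr hcoefN.le) hn]

lemma mul_mix_le_of_upper_lt {a b δ p n : ℝ} (hp : 0 ≤ p) (hn : 0 ≤ n)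
    (ha : 0 ≤ a) (hab : a < b) (hb : b ≤ 1) (hδ : (1 - a) / (2 - a - b) < δ) :
    (1 - δ) * (a * p + (1 - a) * n) ≤ δ * (b * p + (1 - b) * n) := by
  have hδ' : 1 - δ < (1 - b) / ((1 - b) + (1 - a)) := by
    have hsum : (1 - b) + (1 - a) = 2 - a - b := by ring
    rw [hsum, lt_div_iff₀ (by linarith)]
    rw [div_lt_iff₀ (by linarith)] at hδ
    linarith
  have h := mul_mix_le_of_lt_lower hn hp (sub_nonneg.mpr hb) (by linarith) (by linarith) hδ'
  convert h using 2 <;> ring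

theorem stmt_10_general {m : ℕ} (N P : (Fin m → ℝ) → ℝ)
    (hNnonneg : ∀ r, 0 ≤ N r) (hPnonneg : ∀ r, 0 ≤ P r)
    (αl αh : ℝ) (hαl : 0 ≤ αl) (hlh : αl < αh) (hαh : αh ≤ 1)
    (Ql Qh : (Fin m → ℝ) → ℝ)
    (hQl : ∀ r, Ql r = αl * P r + (1 - αl) * N r)
    (hQh : ∀ r, Qh r = αh * P r + (1 - αh) * N r) :
    (∀ δ : ℝ, 0 ≤ δ → δ < αl / (αl + αh) →
      {r : Fin m → ℝ | δ * Qh r > (1 - δ) * Ql r} = ∅)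
    ∧ (∀ δ : ℝ, (1 - αl) / (2 - αl - αh) < δ → δ ≤ 1 →
      {r : Fin m → ℝ | δ * Qh r < (1 - δ) * Ql r} = ∅) := by
  refine ⟨fun δ _ hδ => eq_empty_of_forall_notMem fun r hr => ?_,
    fun δ hδ _ => eq_empty_of_forall_notMem fun r hr => ?_⟩ <;>
    rw [mem_ofPred_eq, hQl, hQh] at hr
  · exact (mul_mix_le_of_lt_lower (hPnonneg r) (hNnonneg r) hαl hlh hαh hδ).not_gt hr
  · exact (mul_mix_le_of_upper_lt (hPnonneg r) (hNnonneg r) hαl hlh hαh hδ).not_gt hr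

/-- For `0 ≤ α_l < α_h ≤ 1`, `δ_l = α_l/(α_l+α_h)`, and
`δ_h = (1-α_l)/(2-α_l-α_h)`: for every `δ ∈ [0, δ_l)` the set
`{r : δ·Q_h(r) > (1-δ)·Q_l(r)}` is empty, and for every `δ ∈ (δ_h, 1]` the set
`{r : δ·Q_h(r) < (1-δ)·Q_l(r)}` is empty. -/
theorem stmt_10 {m : ℕ} (N P : (Fin m → ℝ) → ℝ)
    (hNmeas : Measurable N) (hPmeas : Measurable P)
    (hNnonneg : ∀ r, 0 ≤ N r) (hPnonneg : ∀ r, 0 ≤ P r)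
    (αl αh : ℝ) (hαl : 0 ≤ αl) (hlh : αl < αh) (hαh : αh ≤ 1)
    (Ql Qh : (Fin m → ℝ) → ℝ)
    (hQl : ∀ r, Ql r = αl * P r + (1 - αl) * N r)
    (hQh : ∀ r, Qh r = αh * P r + (1 - αh) * N r) :
    (∀ δ : ℝ, 0 ≤ δ → δ < αl / (αl + αh) →
      {r : Fin m → ℝ | δ * Qh r > (1 - δ) * Ql r} = ∅)
    ∧ (∀ δ : ℝ, (1 - αl) / (2 - αl - αh) < δ → δ ≤ 1 →
      {r : Fin m → ℝ | δ * Qh r < (1 - δ) * Ql r} = ∅) :=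
  stmt_10_general N P hNnonneg hPnonneg αl αh hαl hlh hαh Ql Qh hQl hQh
end

section
/- (Boundary Jumping) Assume the supports of P and N are partially disjoint: there exists a measurable set D̃_p with ∫_{D̃_p} P > 0 and ∫_{D̃_p} N = 0. Let 0 < α_l < α_h ≤ 1 and δ_l = α_l/(α_l+α_h), and define F(δ) = ∫_{𝔻_p(δ)} P(r) dr where 𝔻_p(δ) = {r : δ·Q_h(r) ≥ (1-δ)·Q_l(r)}. Then F(δ) = 0 for every δ < δ_l, while the right limit lim_{δ ↓ δ_l} F(δ) = ∫_{{r : N(r)=0}} P(r) dr > 0. Hence the measure F is discontinuous at δ = δ_l. -/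
open MeasureTheory Set Filter

/-! The inequality `δ Q_h ≥ (1 - δ) Q_l` reads `a(δ) P + b(δ) N ≥ 0` with affine coefficients
`a(δ) = δ (α_l + α_h) - α_l` and `b(δ) = δ (2 - α_l - α_h) - (1 - α_l)`; `a` vanishes at `δ_l`,
where `b(δ_l) = (α_l - α_h)/(α_l + α_h) < 0`. Below `δ_l` both coefficients are negative, so the
region carries no `P`-mass. As `δ ↓ δ_l`, membership of a point in the region eventually agrees
with `N = 0`, so dominated convergence gives the limit `∫_{N = 0} P`, which is at least
`∫_{D̃_p} P > 0` because `N` vanishes a.e. on `D̃_p`. -/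

theorem tendsto_setIntegral_of_eventually_mem_iff {α ι E : Type*} [MeasurableSpace α]
    [NormedAddCommGroup E] [NormedSpace ℝ E] {μ : Measure α} {l : Filter ι}
    [l.IsCountablyGenerated] {f : α → E} {S : ι → Set α} {T : Set α}
    (hS : ∀ i, MeasurableSet (S i)) (hT : MeasurableSet T) (hf : Integrable f μ)
    (hST : ∀ᵐ x ∂μ, ∀ᶠ i in l, x ∈ S i ↔ x ∈ T) :
    Tendsto (fun i => ∫ x in S i, f x ∂μ) l (nhds (∫ x in T, f x ∂μ)) := by
  simp only [← integral_indicator (hS _), ← integral_indicator hT]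
  refine tendsto_integral_filter_of_dominated_convergence (fun x => ‖f x‖)
    (.of_forall fun i => hf.aestronglyMeasurable.indicator (hS i))
    (.of_forall fun i => .of_forall fun x => norm_indicator_le_norm_self _ _) hf.norm ?_
  filter_upwards [hST] with x hx
  refine tendsto_const_nhds.congr' ?_
  filter_upwards [hx] with i hi
  classical
  rw [indicator_apply, indicator_apply, hi]

theorem ae_subset_setOf_eq_zero_of_setIntegral_eq_zero {α : Type*} [MeasurableSpace α]
    {μ : Measure α} {g : α → ℝ} {D : Set α} (hg : Measurable g) (hg0 : ∀ x, 0 ≤ g x)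
    (hgi : IntegrableOn g D μ) (hD : ∫ x in D, g x ∂μ = 0) : D ≤ᵐ[μ] {x | g x = 0} :=
  (ae_restrict_iff (hg (measurableSet_singleton 0))).1
    ((setIntegral_eq_zero_iff_of_nonneg_ae (.of_forall hg0) hgi).1 hD)

section Mixture

variable {αl αh δ p n : ℝ}

theorem mixture_sub_mixture_eq (δ αl αh p n : ℝ) :
    δ * (αh * p + (1 - αh) * n) - (1 - δ) * (αl * p + (1 - αl) * n)
      = (δ * (αl + αh) - αl) * p + (δ * (2 - αl - αh) - (1 - αl)) * n := by ring

theorem eq_zero_of_mixture_le_of_lt_div (hsum : 0 < αl + αh) (hlh : αl < αh) (hαh : αh ≤ 1)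
    (hp : 0 ≤ p) (hn : 0 ≤ n) (hδ : δ < αl / (αl + αh))
    (h : (1 - δ) * (αl * p + (1 - αl) * n) ≤ δ * (αh * p + (1 - αh) * n)) : p = 0 := by
  rw [lt_div_iff₀ hsum] at hδ
  have hb : δ * (2 - αl - αh) - (1 - αl) < 0 := by
    have : δ * (αl + αh) * (2 - αl - αh) ≤ αl * (2 - αl - αh) :=
      mul_le_mul_of_nonneg_right hδ.le (by linarith)
    nlinarith
  have := mixture_sub_mixture_eq δ αl αh p n
  nlinarith [mul_nonpos_of_nonpos_of_nonneg hb.le hn]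

theorem eventually_mixture_le_iff (hsum : 0 < αl + αh) (hlh : αl < αh) (hp : 0 ≤ p)
    (hn : 0 ≤ n) :
    ∀ᶠ δ in nhdsWithin (αl / (αl + αh)) (Ioi (αl / (αl + αh))),
      (1 - δ) * (αl * p + (1 - αl) * n) ≤ δ * (αh * p + (1 - αh) * n) ↔ n = 0 := by
  set δl := αl / (αl + αh)
  have hδl : δl * (αl + αh) = αl := div_mul_cancel₀ _ hsum.ne'
  have hb : δl * (2 - αl - αh) - (1 - αl) < 0 := by nlinarith
  rcases hn.eq_or_lt with rfl | hn
  · filter_upwards [self_mem_nhdsWithin] with δ hδ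
    have : αl < δ * (αl + αh) := by nlinarith [mem_Ioi.1 hδ]
    simp only [iff_true]
    nlinarith [mixture_sub_mixture_eq δ αl αh p 0, mul_nonneg (sub_nonneg.2 this.le) hp]
  · have hcont : Continuous fun δ : ℝ =>
        (δ * (αl + αh) - αl) * p + (δ * (2 - αl - αh) - (1 - αl)) * n := by
      fun_prop
    have hneg : (δl * (αl + αh) - αl) * p + (δl * (2 - αl - αh) - (1 - αl)) * n < 0 := by
      rw [hδl, sub_self, zero_mul, zero_add]
      exact mul_neg_of_neg_of_pos hb hn
    filter_upwards [nhdsWithin_le_nhds ((hcont.tendsto δl).eventually (gt_mem_nhds hneg))]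
      with δ hδ
    simp only [hn.ne', iff_false, not_le]
    linarith [mixture_sub_mixture_eq δ αl αh p n]

end Mixture

theorem stmt_11_general {m : ℕ} (N P : (Fin m → ℝ) → ℝ)
    (hNmeas : Measurable N) (hPmeas : Measurable P)
    (hNnonneg : ∀ r, 0 ≤ N r) (hPnonneg : ∀ r, 0 ≤ P r)
    (hNint : ∫ r, N r = 1) (hPint : ∫ r, P r = 1)
    (αl αh : ℝ) (hαl : 0 < αl) (hlh : αl < αh) (hαh : αh ≤ 1)
    (Ql Qh : (Fin m → ℝ) → ℝ)
    (hQl : ∀ r, Ql r = αl * P r + (1 - αl) * N r)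
    (hQh : ∀ r, Qh r = αh * P r + (1 - αh) * N r)
    (Dtilde : Set (Fin m → ℝ))
    (hDP : 0 < ∫ r in Dtilde, P r) (hDN : ∫ r in Dtilde, N r = 0)
    (F : ℝ → ℝ)
    (hF : ∀ δ, F δ = ∫ r in {r : Fin m → ℝ | δ * Qh r ≥ (1 - δ) * Ql r}, P r) :
    (∀ δ : ℝ, δ < αl / (αl + αh) → F δ = 0)
    ∧ Tendsto F (nhdsWithin (αl / (αl + αh)) (Set.Ioi (αl / (αl + αh))))
        (nhds (∫ r in {r : Fin m → ℝ | N r = 0}, P r))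
    ∧ 0 < ∫ r in {r : Fin m → ℝ | N r = 0}, P r := by
  obtain rfl : Ql = fun r => αl * P r + (1 - αl) * N r := funext hQl
  obtain rfl : Qh = fun r => αh * P r + (1 - αh) * N r := funext hQh
  obtain rfl := funext hF
  have hsum : 0 < αl + αh := by linarith
  have hPi : Integrable P := .of_integral_ne_zero (by simp [hPint])
  have hNi : Integrable N := .of_integral_ne_zero (by simp [hNint])
  refine ⟨fun δ hδ => ?_, ?_, ?_⟩
  · exact setIntegral_eq_zero_of_forall_eq_zero fun r hr =>
      eq_zero_of_mixture_le_of_lt_div hsum hlh hαh (hPnonneg r) (hNnonneg r) hδ hr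
  · exact tendsto_setIntegral_of_eventually_mem_iff
      (fun δ => measurableSet_le (by fun_prop) (by fun_prop)) (hNmeas (measurableSet_singleton 0))
      hPi (.of_forall fun r => eventually_mixture_le_iff hsum hlh (hPnonneg r) (hNnonneg r))
  · exact hDP.trans_le (setIntegral_mono_set hPi.integrableOn (.of_forall hPnonneg)
      (ae_subset_setOf_eq_zero_of_setIntegral_eq_zero hNmeas hNnonneg hNi.integrableOn hDN))

/-- Boundary Jumping: Assume partially disjoint supports (there is a
measurable `D̃_p` with `∫_{D̃_p} P > 0` and `∫_{D̃_p} N = 0`), and let `0 < α_l < α_h ≤ 1`,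
`δ_l = α_l/(α_l+α_h)`, `F(δ) = ∫_{𝔻_p(δ)} P` where
`𝔻_p(δ) = {r : δ·Q_h(r) ≥ (1-δ)·Q_l(r)}`. Then `F(δ) = 0` for every `δ < δ_l`, while
`lim_{δ ↓ δ_l} F(δ) = ∫_{{N = 0}} P > 0`; hence `F` is discontinuous at `δ_l`. -/
theorem stmt_11 {m : ℕ} (N P : (Fin m → ℝ) → ℝ)
    (hNmeas : Measurable N) (hPmeas : Measurable P)
    (hNnonneg : ∀ r, 0 ≤ N r) (hPnonneg : ∀ r, 0 ≤ P r)
    (hNint : ∫ r, N r = 1) (hPint : ∫ r, P r = 1)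
    (αl αh : ℝ) (hαl : 0 < αl) (hlh : αl < αh) (hαh : αh ≤ 1)
    (Ql Qh : (Fin m → ℝ) → ℝ)
    (hQl : ∀ r, Ql r = αl * P r + (1 - αl) * N r)
    (hQh : ∀ r, Qh r = αh * P r + (1 - αh) * N r)
    (Dtilde : Set (Fin m → ℝ)) (hDtilde : MeasurableSet Dtilde)
    (hDP : 0 < ∫ r in Dtilde, P r) (hDN : ∫ r in Dtilde, N r = 0)
    (F : ℝ → ℝ)
    (hF : ∀ δ, F δ = ∫ r in {r : Fin m → ℝ | δ * Qh r ≥ (1 - δ) * Ql r}, P r) :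
    (∀ δ : ℝ, δ < αl / (αl + αh) → F δ = 0)
    ∧ Tendsto F (nhdsWithin (αl / (αl + αh)) (Set.Ioi (αl / (αl + αh))))
        (nhds (∫ r in {r : Fin m → ℝ | N r = 0}, P r))
    ∧ 0 < ∫ r in {r : Fin m → ℝ | N r = 0}, P r :=
  stmt_11_general N P hNmeas hPmeas hNnonneg hPnonneg hNint hPint αl αh hαl hlh hαh Ql Qh hQl hQh
    Dtilde hDP hDN F hF
end

section
/- (Class-Agnostic Prevalence Estimator) Let D ⊆ ℝ^m be measurable with |P_D - N_D| > 0, let q ∈ [0,1], and let r_1, ..., r_s be independent and identically distributed random variables with common density Q(r;q) = q·P(r) + (1-q)·N(r). Define Q̃_D = (1/s)·Σ_{i=1}^s 1[r_i ∈ D] and q̃ = (Q̃_D - N_D)/(P_D - N_D). Then E[q̃] = q (the estimator is unbiased), and E[(q̃ - q)²] = Q_D(1-Q_D)/(s·(P_D - N_D)²), which tends to 0 as s → ∞, so q̃ converges to q in mean square. -/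
/-!
The indicators `1[r_i ∈ D]` are pairwise independent Bernoulli variables whose success
probability is `Q_D`, the integral of the mixture density over `D`; hence the sample mean `Q̃_D`
has mean `Q_D` and variance `Q_D (1 - Q_D) / s`. The estimator `q̃` is the affine image
`(Q̃_D - N_D) / (P_D - N_D)` of `Q̃_D`, and `Q_D = N_D + q (P_D - N_D)`, so `q̃` has mean `q`
and its mean-square error is its variance `Q_D (1 - Q_D) / (s (P_D - N_D)²)`.
-/

open MeasureTheory ProbabilityTheory Set Filter

section

variable {Ω : Type*} [MeasurableSpace Ω] {μ : Measure Ω}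

theorem measureReal_preimage_eq_setIntegral_of_map_eq_withDensity {α : Type*}
    [MeasurableSpace α] {ν : Measure α} {Y : Ω → α} {f : α → ℝ} {D : Set α} (hY : Measurable Y)
    (hmap : μ.map Y = ν.withDensity fun r => ENNReal.ofReal (f r))
    (hD : MeasurableSet D) (hf : IntegrableOn f D ν) (hf0 : 0 ≤ᵐ[ν.restrict D] f) :
    μ.real (Y ⁻¹' D) = ∫ r in D, f r ∂ν := by
  rw [measureReal_def, ← Measure.map_apply hY hD, hmap, withDensity_apply _ hD,
    ← ofReal_integral_eq_lintegral_ofReal hf hf0,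
    ENNReal.toReal_ofReal (integral_nonneg_of_ae hf0)]

theorem measureReal_preimage_of_map_eq_mixture {α : Type*} [MeasurableSpace α] {ν : Measure α}
    {N P : α → ℝ} (hN : Integrable N ν) (hP : Integrable P ν) (hN0 : ∀ r, 0 ≤ N r)
    (hP0 : ∀ r, 0 ≤ P r) {q : ℝ} (hq : q ∈ Icc (0 : ℝ) 1) {Y : Ω → α} (hY : Measurable Y)
    (hmap : μ.map Y = ν.withDensity fun r => ENNReal.ofReal (q * P r + (1 - q) * N r))
    {D : Set α} (hD : MeasurableSet D) :
    μ.real (Y ⁻¹' D) = q * ∫ r in D, P r ∂ν + (1 - q) * ∫ r in D, N r ∂ν := by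
  rw [measureReal_preimage_eq_setIntegral_of_map_eq_withDensity hY hmap hD
      ((hP.const_mul q).add (hN.const_mul (1 - q))).integrableOn
      (ae_of_all _ fun r =>
        add_nonneg (mul_nonneg hq.1 (hP0 r)) (mul_nonneg (sub_nonneg.2 hq.2) (hN0 r))),
    integral_add (hP.const_mul q).integrableOn (hN.const_mul (1 - q)).integrableOn,
    integral_const_mul, integral_const_mul]

theorem variance_indicator_one [IsProbabilityMeasure μ] {A : Set Ω} (hA : MeasurableSet A) :
    Var[A.indicator 1; μ] = μ.real A * (1 - μ.real A) := by
  have hsq : A.indicator (1 : Ω → ℝ) ^ 2 = A.indicator 1 := by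
    ext ω; by_cases h : ω ∈ A <;> simp [h]
  have hL : MemLp (A.indicator (1 : Ω → ℝ)) 2 μ :=
    memLp_indicator_const 2 hA 1 (Or.inr (measure_ne_top μ A))
  rw [variance_eq_sub hL, hsq, integral_indicator_one hA]
  ring

section SampleMean

variable {ι : Type*} [Fintype ι] {X : ι → Ω → ℝ}

theorem integral_sampleMean [Nonempty ι] (hX : ∀ i, Integrable (X i) μ) {m : ℝ}
    (hm : ∀ i, μ[X i] = m) :
    μ[fun ω => (∑ i, X i ω) / Fintype.card ι] = m := by
  rw [integral_div, integral_finsetSum _ fun i _ => hX i]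
  simp [hm]

theorem variance_sampleMean (hX : ∀ i, MemLp (X i) 2 μ)
    (hindep : Pairwise fun i j => X i ⟂ᵢ[μ] X j) {v : ℝ} (hv : ∀ i, Var[X i; μ] = v) :
    Var[fun ω => (∑ i, X i ω) / Fintype.card ι; μ] = v / Fintype.card ι := by
  have hsum : Var[∑ i, X i; μ] = Fintype.card ι * v := by
    rw [IndepFun.variance_sum (fun i _ => hX i) fun i _ j _ hij => hindep hij]
    simp [hv]
  simp_rw [div_eq_inv_mul, variance_const_mul, ← Finset.sum_apply, hsum]
  obtain hn | hn := eq_or_ne (Fintype.card ι : ℝ) 0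
  · simp [hn]
  · field_simp

variable [IsProbabilityMeasure μ] {A : ι → Set Ω} {p : ℝ}

theorem integral_frequency [Nonempty ι] (hA : ∀ i, MeasurableSet (A i))
    (hp : ∀ i, μ.real (A i) = p) :
    μ[fun ω => (∑ i, (A i).indicator (1 : Ω → ℝ) ω) / Fintype.card ι] = p :=
  integral_sampleMean (fun i => (integrable_const 1).indicator (hA i))
    fun i => (integral_indicator_one (hA i)).trans (hp i)

theorem variance_frequency (hA : ∀ i, MeasurableSet (A i))
    (hindep : Pairwise fun i j => (A i).indicator (1 : Ω → ℝ) ⟂ᵢ[μ] (A j).indicator (1 : Ω → ℝ))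
    (hp : ∀ i, μ.real (A i) = p) :
    Var[fun ω => (∑ i, (A i).indicator (1 : Ω → ℝ) ω) / Fintype.card ι; μ]
      = p * (1 - p) / Fintype.card ι :=
  variance_sampleMean (fun i => memLp_indicator_const 2 (hA i) 1 (Or.inr (measure_ne_top _ _)))
    hindep fun i => (variance_indicator_one (hA i)).trans (by rw [hp i])

end SampleMean

section AffineEstimator

variable [IsProbabilityMeasure μ] {F : Ω → ℝ} {a c q : ℝ}

theorem integral_sub_div_of_integral_eq (hF : Integrable F μ) (hc : c ≠ 0)
    (hmean : μ[F] = a + q * c) :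
    μ[fun ω => (F ω - a) / c] = q := by
  rw [integral_div, integral_sub hF (integrable_const a), hmean]
  simp only [integral_const, probReal_univ, smul_eq_mul, one_mul]
  field_simp
  ring

theorem integral_sq_sub_div_of_integral_eq (hF : Integrable F μ) (hc : c ≠ 0)
    (hmean : μ[F] = a + q * c) :
    ∫ ω, ((F ω - a) / c - q) ^ 2 ∂μ = Var[F; μ] / c ^ 2 := by
  rw [← integral_sub_div_of_integral_eq hF hc hmean,
    ← variance_eq_integral (X := fun ω => (F ω - a) / c) (by fun_prop)]
  simp_rw [div_eq_inv_mul _ c]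
  rw [variance_const_mul, variance_sub_const hF.aestronglyMeasurable]
  field_simp

end AffineEstimator

end

theorem stmt_16_general {m : ℕ} {Ω : Type*} [MeasurableSpace Ω]
    (μ : Measure Ω) [IsProbabilityMeasure μ]
    (N P : (Fin m → ℝ) → ℝ)
    (hNnonneg : ∀ r, 0 ≤ N r) (hPnonneg : ∀ r, 0 ≤ P r)
    (hNint : ∫ r, N r = 1) (hPint : ∫ r, P r = 1)
    (q : ℝ) (hq : q ∈ Set.Icc (0 : ℝ) 1)
    (D : Set (Fin m → ℝ)) (hD : MeasurableSet D)
    (hPN : |(∫ r in D, P r) - ∫ r in D, N r| > 0)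
    (s : ℕ) (hs : 0 < s)
    (R : Fin s → Ω → (Fin m → ℝ))
    (hRmeas : ∀ i, Measurable (R i))
    (hdist : ∀ i, μ.map (R i)
      = volume.withDensity (fun r => ENNReal.ofReal (q * P r + (1 - q) * N r)))
    (hindep : iIndepFun R μ) :
    (∫ ω, ((∑ i, D.indicator (fun _ => (1 : ℝ)) (R i ω)) / s - ∫ r in D, N r)
        / ((∫ r in D, P r) - ∫ r in D, N r) ∂μ = q)
    ∧ (∫ ω, (((∑ i, D.indicator (fun _ => (1 : ℝ)) (R i ω)) / s - ∫ r in D, N r)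
          / ((∫ r in D, P r) - ∫ r in D, N r) - q) ^ 2 ∂μ
        = (q * (∫ r in D, P r) + (1 - q) * ∫ r in D, N r)
            * (1 - (q * (∫ r in D, P r) + (1 - q) * ∫ r in D, N r))
            / (s * ((∫ r in D, P r) - ∫ r in D, N r) ^ 2))
    ∧ Tendsto (fun n : ℕ =>
        (q * (∫ r in D, P r) + (1 - q) * ∫ r in D, N r)
          * (1 - (q * (∫ r in D, P r) + (1 - q) * ∫ r in D, N r))
          / (n * ((∫ r in D, P r) - ∫ r in D, N r) ^ 2)) atTop (nhds 0) := by
  set nd := ∫ r in D, N r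
  set pd := ∫ r in D, P r
  set p := q * pd + (1 - q) * nd
  have hc : pd - nd ≠ 0 := abs_pos.mp hPN
  have hpreimage : ∀ i ω, D.indicator (fun _ => (1 : ℝ)) (R i ω) = (R i ⁻¹' D).indicator 1 ω :=
    fun _ _ => rfl
  simp only [hpreimage]
  have hA : ∀ i, MeasurableSet (R i ⁻¹' D) := fun i => hRmeas i hD
  have hprob : ∀ i, μ.real (R i ⁻¹' D) = p := fun i =>
    measureReal_preimage_of_map_eq_mixture (.of_integral_ne_zero (by simp [hNint]))
      (.of_integral_ne_zero (by simp [hPint])) hNnonneg hPnonneg hq (hRmeas i) (hdist i) hD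
  have hindicator : Pairwise fun i j =>
      (R i ⁻¹' D).indicator (1 : Ω → ℝ) ⟂ᵢ[μ] (R j ⁻¹' D).indicator 1 := fun i j hij =>
    have hg : Measurable (D.indicator fun _ => (1 : ℝ)) := measurable_const.indicator hD
    (hindep.indepFun hij).comp hg hg
  have : Nonempty (Fin s) := ⟨⟨0, hs⟩⟩
  have hfreq := integral_frequency hA hprob
  have hvar := variance_frequency hA hindicator hprob
  simp only [Fintype.card_fin] at hfreq hvar
  have hmean : μ[fun ω => (∑ i, (R i ⁻¹' D).indicator 1 ω) / (s : ℝ)] = nd + q * (pd - nd) :=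
    hfreq.trans (by ring)
  have hF : Integrable (fun ω => (∑ i, (R i ⁻¹' D).indicator (1 : Ω → ℝ) ω) / (s : ℝ)) μ :=
    (integrable_finsetSum _ fun i _ => (integrable_const 1).indicator (hA i)).div_const _
  refine ⟨integral_sub_div_of_integral_eq hF hc hmean, ?_, ?_⟩
  · rw [integral_sq_sub_div_of_integral_eq hF hc hmean, hvar]
    field_simp
  · simp_rw [mul_comm _ ((pd - nd) ^ 2), ← div_div]
    exact tendsto_const_div_atTop_nhds_zero_nat _

/-- Class-Agnostic Prevalence Estimator: Let `D` be measurable with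
`|P_D - N_D| > 0`, `q ∈ [0,1]`, and `r_1, ..., r_s` iid with common density
`Q(r;q) = q·P(r) + (1-q)·N(r)`. With `Q̃_D = (1/s)·Σ_i 1[r_i ∈ D]` and
`q̃ = (Q̃_D - N_D)/(P_D - N_D)`, the estimator is unbiased, `E[q̃] = q`, and
`E[(q̃-q)²] = Q_D(1-Q_D)/(s(P_D-N_D)²) → 0` as `s → ∞`, so `q̃` converges to `q` in mean
square. -/
theorem stmt_16 {m : ℕ} {Ω : Type*} [MeasurableSpace Ω]
    (μ : Measure Ω) [IsProbabilityMeasure μ]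
    (N P : (Fin m → ℝ) → ℝ)
    (hNmeas : Measurable N) (hPmeas : Measurable P)
    (hNnonneg : ∀ r, 0 ≤ N r) (hPnonneg : ∀ r, 0 ≤ P r)
    (hNint : ∫ r, N r = 1) (hPint : ∫ r, P r = 1)
    (q : ℝ) (hq : q ∈ Set.Icc (0 : ℝ) 1)
    (D : Set (Fin m → ℝ)) (hD : MeasurableSet D)
    (hPN : |(∫ r in D, P r) - ∫ r in D, N r| > 0)
    (s : ℕ) (hs : 0 < s)
    (R : Fin s → Ω → (Fin m → ℝ))
    (hRmeas : ∀ i, Measurable (R i))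
    (hdist : ∀ i, μ.map (R i)
      = volume.withDensity (fun r => ENNReal.ofReal (q * P r + (1 - q) * N r)))
    (hindep : iIndepFun R μ) :
    (∫ ω, ((∑ i, D.indicator (fun _ => (1 : ℝ)) (R i ω)) / s - ∫ r in D, N r)
        / ((∫ r in D, P r) - ∫ r in D, N r) ∂μ = q)
    ∧ (∫ ω, (((∑ i, D.indicator (fun _ => (1 : ℝ)) (R i ω)) / s - ∫ r in D, N r)
          / ((∫ r in D, P r) - ∫ r in D, N r) - q) ^ 2 ∂μ
        = (q * (∫ r in D, P r) + (1 - q) * ∫ r in D, N r)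
            * (1 - (q * (∫ r in D, P r) + (1 - q) * ∫ r in D, N r))
            / (s * ((∫ r in D, P r) - ∫ r in D, N r) ^ 2))
    ∧ Tendsto (fun n : ℕ =>
        (q * (∫ r in D, P r) + (1 - q) * ∫ r in D, N r)
          * (1 - (q * (∫ r in D, P r) + (1 - q) * ∫ r in D, N r))
          / (n * ((∫ r in D, P r) - ∫ r in D, N r) ^ 2)) atTop (nhds 0) :=
  stmt_16_general μ N P hNnonneg hPnonneg hNint hPint q hq D hD hPN s hs R hRmeas hdist hindep
end
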